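/- arXiv:1911.05425 — 9 statements merged into one kernel-verified Lean document; each statement's English description precedes it below -/
import Mathlib

section
/- Let p(x) = c_0 + c_1 x + ... + c_n x^n be a nonzero real polynomial and set d_j = c_0 + c_1 + ... + c_j for j = 0, ..., n. If d_j >= 0 for all j = 0, ..., n, then p(x) > 0 for all x in the open interval (0,1). Similarly, if d_j <= 0 for all j = 0, ..., n, then p(x) < 0 for all x in (0,1). -/
/-! Summation by parts writes `p(x) = (1 - x) ∑_{j ≤ n} d_j x^j + d_n x^{n+1}`. For `0 < x < 1` every
term is nonnegative when all `d_j ≥ 0`, and some `d_k` is nonzero because `c_j = d_j - d_{j-1}`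
and `p ≠ 0`; its term makes the sum positive. The nonpositive case follows by applying this to `-p`. -/

open Finset

theorem sum_range_succ_mul_pow_eq_one_sub_mul_add {R : Type*} [CommRing R] (c : ℕ → R) (x : R)
    (n : ℕ) :
    ∑ j ∈ range (n + 1), c j * x ^ j =
      (1 - x) * ∑ j ∈ range (n + 1), (∑ i ∈ range (j + 1), c i) * x ^ j
        + (∑ i ∈ range (n + 1), c i) * x ^ (n + 1) := by
  induction n with
  | zero => simp only [zero_add, sum_range_one, pow_zero, pow_one]; ring
  | succ n ih =>
    rw [sum_range_succ, ih, sum_range_succ (fun j ↦ (∑ i ∈ range (j + 1), c i) * x ^ j) (n + 1),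
      sum_range_succ c (n + 1)]
    ring

theorem exists_sum_range_succ_ne_zero {M : Type*} [AddCommGroup M] {c : ℕ → M} {n : ℕ}
    (hne : ∃ j ≤ n, c j ≠ 0) : ∃ k ≤ n, ∑ i ∈ range (k + 1), c i ≠ 0 := by
  obtain ⟨j, hj, hcj⟩ := hne
  by_contra! hd
  cases j with
  | zero => exact hcj (by simpa using hd 0 n.zero_le)
  | succ m =>
    have hsucc := hd (m + 1) hj
    rw [sum_range_succ, hd m (by omega), zero_add] at hsucc
    exact hcj hsucc

theorem sum_mul_pow_pos_of_sum_range_nonneg {R : Type*} [CommRing R] [LinearOrder R]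
    [IsStrictOrderedRing R] {c : ℕ → R} {n : ℕ} (hne : ∃ j ≤ n, c j ≠ 0)
    (hd : ∀ j ≤ n, 0 ≤ ∑ i ∈ range (j + 1), c i) {x : R} (hx : x ∈ Set.Ioo 0 1) :
    0 < ∑ j ∈ range (n + 1), c j * x ^ j := by
  obtain ⟨k, hk, hdk⟩ := exists_sum_range_succ_ne_zero hne
  have hsum : 0 < ∑ j ∈ range (n + 1), (∑ i ∈ range (j + 1), c i) * x ^ j :=
    sum_pos' (fun j hj ↦ mul_nonneg (hd j (by simpa [Nat.lt_succ_iff] using hj))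
        (pow_nonneg hx.1.le j))
      ⟨k, mem_range.2 (by omega), mul_pos ((hd k hk).lt_of_ne' hdk) (pow_pos hx.1 k)⟩
  rw [sum_range_succ_mul_pow_eq_one_sub_mul_add]
  exact add_pos_of_pos_of_nonneg (mul_pos (sub_pos.2 hx.2) hsum)
    (mul_nonneg (hd n le_rfl) (pow_nonneg hx.1.le _))

/-- Remark 1 of the paper: if `p(x) = c₀ + c₁ x + ⋯ + cₙ xⁿ` is a nonzero real polynomial
whose partial sums of coefficients `d_j = c₀ + ⋯ + c_j` are all nonnegative, then `p > 0`
on `(0,1)`; if they are all nonpositive, then `p < 0` on `(0,1)`. -/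
theorem stmt_0 (n : ℕ) (c : ℕ → ℝ) (hne : ∃ j ≤ n, c j ≠ 0)
    (p : ℝ → ℝ) (hp : ∀ x, p x = ∑ j ∈ Finset.range (n + 1), c j * x ^ j) :
    ((∀ j ≤ n, 0 ≤ ∑ i ∈ Finset.range (j + 1), c i) →
      ∀ x ∈ Set.Ioo (0 : ℝ) 1, 0 < p x) ∧
    ((∀ j ≤ n, (∑ i ∈ Finset.range (j + 1), c i) ≤ 0) →
      ∀ x ∈ Set.Ioo (0 : ℝ) 1, p x < 0) := by
  refine ⟨fun hd x hx ↦ hp x ▸ sum_mul_pow_pos_of_sum_range_nonneg hne hd hx, fun hd x hx ↦ ?_⟩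
  have hneg := sum_mul_pow_pos_of_sum_range_nonneg (c := -c) (by simpa using hne)
    (fun j hj ↦ by simpa [sum_neg_distrib] using hd j hj) hx
  simpa [hp, neg_mul, sum_neg_distrib] using hneg
end

section
/- The set of zeros of the function t ↦ T_6(cos(π/12)·t) in the open interval (0,1) is exactly {√3 − 1, 2 − √3}, where T_6 denotes the Chebyshev polynomial of the first kind of degree 6. -/
/-!
Since `cos² (π/12) = (2 + √3)/4`, the function `t ↦ T₆(cos(π/12)·t)` is a cubic in `t²` with
coefficients in `ℚ(√3)`. Besides `t² = 1` (coming from `T₆(cos(π/12)) = 0`) its roots are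
`t² = (√3 - 1)²` and `t² = (2 - √3)²`, and of the square roots of these three values exactly
`√3 - 1` and `2 - √3` lie in `(0, 1)`.
-/

open Real

theorem Polynomial.Chebyshev.eval_T_six {R : Type*} [CommRing R] (x : R) :
    (T R 6).eval x = 32 * x ^ 6 - 48 * x ^ 4 + 18 * x ^ 2 - 1 := by
  rw [show (6 : ℤ) = 2 * (1 + 2) by norm_num, T_mul, T_add_two]
  simp only [one_add_one_eq_two, T_two, T_one, eval_comp, eval_sub, eval_mul, eval_pow,
    eval_ofNat, eval_X, eval_one]
  ring

theorem Real.cos_pi_div_twelve_sq : cos (π / 12) ^ 2 = (2 + √3) / 4 := by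
  rw [cos_sq, show 2 * (π / 12) = π / 6 by ring, cos_pi_div_six]
  ring

theorem eval_T_six_cos_pi_div_twelve_mul (t : ℝ) :
    (Polynomial.Chebyshev.T ℝ 6).eval (cos (π / 12) * t) =
      (26 + 15 * √3) / 2 * ((t ^ 2 - 1) * (t ^ 2 - (√3 - 1) ^ 2) * (t ^ 2 - (2 - √3) ^ 2)) := by
  have h3 : √3 ^ 2 = 3 := sq_sqrt (by norm_num)
  rw [Polynomial.Chebyshev.eval_T_six, show (√3 - 1) ^ 2 = 4 - 2 * √3 by linear_combination h3,
    show (2 - √3) ^ 2 = 7 - 4 * √3 by linear_combination h3]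
  calc 32 * (cos (π / 12) * t) ^ 6 - 48 * (cos (π / 12) * t) ^ 4
        + 18 * (cos (π / 12) * t) ^ 2 - 1
      = 32 * ((2 + √3) / 4) ^ 3 * t ^ 6 - 48 * ((2 + √3) / 4) ^ 2 * t ^ 4
        + 18 * ((2 + √3) / 4) * t ^ 2 - 1 := by
        rw [← cos_pi_div_twelve_sq]; ring
    _ = _ := by
        linear_combination
          (√3 * t ^ 6 / 2 + 3 * t ^ 6 - 48 * t ^ 4 + 166 * t ^ 2 - 121 + 60 * √3 * (1 - t ^ 2)) * h3

theorem mem_Ioo_and_mul_sq_sub_sq_eq_zero_iff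
    {K : Type*} [Field K] [LinearOrder K] [IsStrictOrderedRing K]
    {a b t : K} (ha : a ∈ Set.Ioo 0 1) (hb : b ∈ Set.Ioo 0 1) :
    (t ∈ Set.Ioo 0 1 ∧ (t ^ 2 - 1) * (t ^ 2 - a ^ 2) * (t ^ 2 - b ^ 2) = 0) ↔ t = a ∨ t = b := by
  constructor
  · rintro ⟨⟨ht0, ht1⟩, h⟩
    simp only [mul_eq_zero, sub_eq_zero] at h
    rcases h with (h | h) | h
    · nlinarith
    · exact .inl ((pow_left_inj₀ ht0.le ha.1.le two_ne_zero).1 h)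
    · exact .inr ((pow_left_inj₀ ht0.le hb.1.le two_ne_zero).1 h)
  · rintro (rfl | rfl)
    · exact ⟨ha, by ring⟩
    · exact ⟨hb, by ring⟩

/-- The zeros of `t ↦ T₆(cos(π/12)·t)` in `(0,1)` are exactly `√3 − 1` and `2 − √3`,
where `T₆` is the Chebyshev polynomial of the first kind of degree 6. -/
theorem stmt_1 :
    {t ∈ Set.Ioo (0 : ℝ) 1 |
        (Polynomial.Chebyshev.T ℝ 6).eval (Real.cos (π / 12) * t) = 0} =
      {Real.sqrt 3 - 1, 2 - Real.sqrt 3} := by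
  have h1 : 1 < √3 := (lt_sqrt zero_le_one).2 (by norm_num)
  have h2 : √3 < 2 := (sqrt_lt' two_pos).2 (by norm_num)
  ext t
  rw [Set.mem_ofPred_eq, eval_T_six_cos_pi_div_twelve_mul, mul_eq_zero_iff_left (by positivity),
    mem_Ioo_and_mul_sq_sub_sq_eq_zero_iff ⟨by linarith, by linarith⟩ ⟨by linarith, by linarith⟩]
  rfl
end

section
/- The set of zeros of the function t ↦ T_8(cos(π/16)·t) in the open interval (0,1) is exactly {u_1, u_2, u_3}, where u_1 = √(2(2+√2)) − 1 − √2, u_2 = √(2+√2) − 1, and u_3 = 1 + √2 − √(2+√2), and T_8 denotes the Chebyshev polynomial of the first kind of degree 8. -/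
/-!
The zeros of `T₈` are `cos ((2k+1)π/16)`, `k < 8`, and those in `(0, cos (π/16))` are the ones
with `k = 1, 2, 3`; so the zeros `t` are the ratios `cos (mπ/16) / cos (π/16)`, `m = 3, 5, 7`.
These are computed one after the other from
`2 cos a cos (π/16) = cos (a - π/16) + cos (a + π/16)` with `a = π/8, π/4, 3π/8`, using
`cos (π/8) = √(2+√2)/2`, `cos (π/4) = √2/2` and `cos (3π/8) = sin (π/8) = √(2-√2)/2`.
-/

open Real Polynomial Polynomial.Chebyshev Set

lemma eval_T_real_eq_zero_iff (n : ℕ) (x : ℝ) :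
    (T ℝ n).eval x = 0 ↔ ∃ k < n, cos ((2 * k + 1) * π / (2 * n)) = x := by
  rw [← IsRoot.def, ← mem_roots (T_ne_zero (R := ℝ) n), roots_T_real, Finset.mem_val,
    Finset.mem_image]
  simp only [Finset.mem_range]

lemma cos_odd_mul_pi_div_sixteen_mem_Ioo_iff {k : ℕ} (hk : k < 8) :
    cos ((2 * k + 1) * π / 16) ∈ Ioo 0 (cos (π / 16)) ↔ 1 ≤ k ∧ k ≤ 3 := by
  have hmem : ∀ a : ℝ, 0 ≤ a → a ≤ 16 → a * π / 16 ∈ Icc 0 π := fun a h0 h16 =>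
    ⟨by positivity, by nlinarith [pi_pos]⟩
  have hk' : (k : ℝ) ≤ 7 := by exact_mod_cast Nat.le_of_lt_succ hk
  have hθ := hmem (2 * k + 1) (by positivity) (by linarith)
  rw [mem_Ioo, ← cos_pi_div_two, show π / 2 = 8 * π / 16 by ring,
    show π / 16 = 1 * π / 16 by ring,
    strictAntiOn_cos.lt_iff_gt (hmem 8 (by norm_num) (by norm_num)) hθ,
    strictAntiOn_cos.lt_iff_gt hθ (hmem 1 (by norm_num) (by norm_num)),
    div_lt_div_iff_of_pos_right (by norm_num), div_lt_div_iff_of_pos_right (by norm_num),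
    mul_lt_mul_iff_left₀ pi_pos, mul_lt_mul_iff_left₀ pi_pos]
  norm_cast
  omega

lemma zeros_T_real_eight_Ioo :
    {x ∈ Ioo 0 (cos (π / 16)) | (T ℝ 8).eval x = 0} =
      {cos (7 * π / 16), cos (3 * π / 16), cos (5 * π / 16)} := by
  ext x
  rw [mem_sep_iff, show (8 : ℤ) = (8 : ℕ) from rfl, eval_T_real_eq_zero_iff]
  simp only [Nat.cast_ofNat, show (2 : ℝ) * 8 = 16 by norm_num, mem_insert_iff, mem_singleton_iff]
  trans ∃ k : ℕ, (1 ≤ k ∧ k ≤ 3) ∧ cos ((2 * k + 1) * π / 16) = x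
  · constructor
    · rintro ⟨hx, k, hk, rfl⟩
      exact ⟨k, (cos_odd_mul_pi_div_sixteen_mem_Ioo_iff hk).mp hx, rfl⟩
    · rintro ⟨k, hk, rfl⟩
      exact ⟨(cos_odd_mul_pi_div_sixteen_mem_Ioo_iff (by omega)).mpr hk, k, by omega, rfl⟩
  · constructor
    · rintro ⟨k, ⟨h1, h3⟩, rfl⟩
      interval_cases k <;> norm_num
    · rintro (rfl | rfl | rfl)
      exacts [⟨3, by norm_num, by norm_num⟩, ⟨1, by norm_num, by norm_num⟩,
        ⟨2, by norm_num, by norm_num⟩]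

lemma sqrt_two_sub_sqrt_two_add_sqrt_two_add_sqrt_two :
    √(2 - √2) + √(2 + √2) = √(2 * (2 + √2)) := by
  have h2 : √2 ^ 2 = 2 := sq_sqrt (by norm_num)
  have hlt : √2 < 2 := by nlinarith [sqrt_nonneg 2]
  have hprod : √(2 - √2) * √(2 + √2) = √2 := by
    rw [← sqrt_mul (by linarith)]; congr 1; nlinarith
  rw [eq_comm, sqrt_eq_iff_mul_self_eq (by positivity) (by positivity)]
  nlinarith [sq_sqrt (show 0 ≤ 2 - √2 by linarith), sq_sqrt (show 0 ≤ 2 + √2 by positivity)]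

lemma cos_three_pi_div_sixteen : cos (3 * π / 16) = (√(2 + √2) - 1) * cos (π / 16) := by
  have h := two_mul_cos_mul_cos (π / 8) (π / 16)
  rw [cos_pi_div_eight, show π / 8 - π / 16 = π / 16 by ring,
    show π / 8 + π / 16 = 3 * π / 16 by ring] at h
  linear_combination -h

lemma cos_five_pi_div_sixteen : cos (5 * π / 16) = (1 + √2 - √(2 + √2)) * cos (π / 16) := by
  have h := two_mul_cos_mul_cos (π / 4) (π / 16)
  rw [cos_pi_div_four, show π / 4 - π / 16 = 3 * π / 16 by ring, cos_three_pi_div_sixteen,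
    show π / 4 + π / 16 = 5 * π / 16 by ring] at h
  linear_combination -h

lemma cos_seven_pi_div_sixteen :
    cos (7 * π / 16) = (√(2 * (2 + √2)) - 1 - √2) * cos (π / 16) := by
  have h := two_mul_cos_mul_cos (3 * π / 8) (π / 16)
  rw [show 3 * π / 8 = π / 2 - π / 8 by ring, cos_pi_div_two_sub, sin_pi_div_eight,
    show π / 2 - π / 8 - π / 16 = 5 * π / 16 by ring, cos_five_pi_div_sixteen,
    show π / 2 - π / 8 + π / 16 = 7 * π / 16 by ring] at h
  rw [← sqrt_two_sub_sqrt_two_add_sqrt_two_add_sqrt_two]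
  linear_combination -h

/-- The zeros of `t ↦ T₈(cos(π/16)·t)` in `(0,1)` are exactly
`u₁ = √(2(2+√2)) − 1 − √2`, `u₂ = √(2+√2) − 1` and `u₃ = 1 + √2 − √(2+√2)`,
where `T₈` is the Chebyshev polynomial of the first kind of degree 8. -/
theorem stmt_2 :
    {t ∈ Set.Ioo (0 : ℝ) 1 |
        (Polynomial.Chebyshev.T ℝ 8).eval (Real.cos (π / 16) * t) = 0} =
      {Real.sqrt (2 * (2 + Real.sqrt 2)) - 1 - Real.sqrt 2,
       Real.sqrt (2 + Real.sqrt 2) - 1,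
       1 + Real.sqrt 2 - Real.sqrt (2 + Real.sqrt 2)} := by
  have hc : 0 < cos (π / 16) := cos_pos_of_mem_Ioo ⟨by linarith [pi_pos], by linarith [pi_pos]⟩
  ext t
  have key := Set.ext_iff.mp zeros_T_real_eight_Ioo (cos (π / 16) * t)
  rw [mem_sep_iff, mem_Ioo, mul_pos_iff_of_pos_left hc, mul_lt_iff_lt_one_right hc, ← mem_Ioo,
    cos_seven_pi_div_sixteen, cos_three_pi_div_sixteen, cos_five_pi_div_sixteen] at key
  simpa only [mem_sep_iff, mem_insert_iff, mem_singleton_iff, mul_comm _ (cos (π / 16)),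
    mul_right_inj' hc.ne'] using key
end

section
/- Let φ ∈ (0, π/2], c = cos φ, s = sin φ, and let ξ, η ∈ ℝ. Let p(t) = Σ_{j=0}^{3} B_j^3(t) b_j be the cubic Bézier curve on [−1,1] with control points b_0 = (c,−s), b_1 = (ξ,−η), b_2 = (ξ,η), b_3 = (c,s), where B_j^3(t) = C(3,j)((1+t)/2)^j ((1−t)/2)^{3−j}. Then the simplified error function ψ(t) = ‖p(t)‖² − 1 satisfies, for all t, ψ(t) = (1/16)(t²−1)·((3η−s)² t⁴ + (16s² − 9(η+s)² + 9(ξ−c)²) t² + (16 − (3ξ+c)²)). -/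
/-!
Evaluating the Bernstein basis, the cubic with the symmetric control polygon
`(c,−s), (ξ,−η), (ξ,η), (c,s)` is `p(t) = ¼ (c(1+3t²) + 3ξ(1−t²), t(s(3+t²) + 3η(1−t²)))`.
Then `‖p(t)‖² − 1` is an even polynomial of degree 6 vanishing at `t = ±1` (the end points lie on
the unit circle because `c² + s² = 1`), and dividing out `t² − 1` gives the stated quartic in `t`.
-/

open Real

noncomputable def pt (a b : ℝ) : EuclideanSpace ℝ (Fin 2) :=
  (WithLp.equiv 2 (Fin 2 → ℝ)).symm ![a, b]

/-- Reparameterized Bernstein polynomials of degree 3 over `[−1,1]`. -/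
noncomputable def B3 (j : ℕ) (t : ℝ) : ℝ :=
  (Nat.choose 3 j : ℝ) * ((1 + t) / 2) ^ j * ((1 - t) / 2) ^ (3 - j)

lemma norm_pt_sq (a b : ℝ) : ‖pt a b‖ ^ 2 = a ^ 2 + b ^ 2 := by
  simp [pt, EuclideanSpace.norm_sq_eq, Fin.sum_univ_two]

lemma bezier_symmetric_eq_pt (c s ξ η t : ℝ) :
    ∑ j : Fin 4, B3 j t • ![pt c (-s), pt ξ (-η), pt ξ η, pt c s] j =
      pt ((c * (1 + 3 * t ^ 2) + 3 * ξ * (1 - t ^ 2)) / 4)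
        (t * (s * (3 + t ^ 2) + 3 * η * (1 - t ^ 2)) / 4) := by
  rw [Fin.sum_univ_four]
  ext k
  fin_cases k <;> simp [pt, B3] <;> ring

lemma bezier_symmetric_norm_sq_sub_one {c s : ℝ} (hcs : s ^ 2 + c ^ 2 = 1) (ξ η t : ℝ) :
    ((c * (1 + 3 * t ^ 2) + 3 * ξ * (1 - t ^ 2)) / 4) ^ 2
        + (t * (s * (3 + t ^ 2) + 3 * η * (1 - t ^ 2)) / 4) ^ 2 - 1 =
      (1 / 16) * (t ^ 2 - 1) *
        ((3 * η - s) ^ 2 * t ^ 4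
          + (16 * s ^ 2 - 9 * (η + s) ^ 2 + 9 * (ξ - c) ^ 2) * t ^ 2
          + (16 - (3 * ξ + c) ^ 2)) := by
  linear_combination t ^ 2 * hcs

theorem stmt_4_general (φ : ℝ)
    (c s ξ η : ℝ) (hc : c = Real.cos φ) (hs : s = Real.sin φ)
    (b : Fin 4 → EuclideanSpace ℝ (Fin 2))
    (hb : b = ![pt c (-s), pt ξ (-η), pt ξ η, pt c s])
    (p : ℝ → EuclideanSpace ℝ (Fin 2))
    (hp : ∀ t, p t = ∑ j : Fin 4, B3 (j : ℕ) t • b j)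
    (ψ : ℝ → ℝ) (hψ : ∀ t, ψ t = ‖p t‖ ^ 2 - 1) :
    ∀ t : ℝ, ψ t = (1 / 16) * (t ^ 2 - 1) *
      ((3 * η - s) ^ 2 * t ^ 4
        + (16 * s ^ 2 - 9 * (η + s) ^ 2 + 9 * (ξ - c) ^ 2) * t ^ 2
        + (16 - (3 * ξ + c) ^ 2)) := by
  intro t
  have hcs : s ^ 2 + c ^ 2 = 1 := by rw [hs, hc]; exact sin_sq_add_cos_sq φ
  rw [hψ, hp, hb, bezier_symmetric_eq_pt, norm_pt_sq]
  exact bezier_symmetric_norm_sq_sub_one hcs ξ η t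

/-- The simplified error function of the cubic G⁰ Bézier interpolant of a circular arc:
for control points `b₀ = (c,−s)`, `b₁ = (ξ,−η)`, `b₂ = (ξ,η)`, `b₃ = (c,s)`,
`ψ(t) = ‖p(t)‖² − 1` has the stated closed form. -/
theorem stmt_4 (φ : ℝ) (hφ : φ ∈ Set.Ioc 0 (π / 2))
    (c s ξ η : ℝ) (hc : c = Real.cos φ) (hs : s = Real.sin φ)
    (b : Fin 4 → EuclideanSpace ℝ (Fin 2))
    (hb : b = ![pt c (-s), pt ξ (-η), pt ξ η, pt c s])
    (p : ℝ → EuclideanSpace ℝ (Fin 2))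
    (hp : ∀ t, p t = ∑ j : Fin 4, B3 (j : ℕ) t • b j)
    (ψ : ℝ → ℝ) (hψ : ∀ t, ψ t = ‖p t‖ ^ 2 - 1) :
    ∀ t : ℝ, ψ t = (1 / 16) * (t ^ 2 - 1) *
      ((3 * η - s) ^ 2 * t ^ 4
        + (16 * s ^ 2 - 9 * (η + s) ^ 2 + 9 * (ξ - c) ^ 2) * t ^ 2
        + (16 - (3 * ξ + c) ^ 2)) :=
  stmt_4_general φ c s ξ η hc hs b hb p hp ψ hψ
end

section
/- Let φ ∈ (0, π/2), c = cos φ, s = sin φ, ξ, η ∈ ℝ with ξ ≠ c, and let ψ(t) = (1/16)(t²−1)·((3η−s)² t⁴ + (16s² − 9(η+s)² + 9(ξ−c)²) t² + (16 − (3ξ+c)²)). If ψ(√3−1) = 0 and ψ(2−√3) = 0, then f(ξ) = 0, where f(ξ) = 243ξ³ − 27c(11 − 16√3)ξ² − 3(32(1 + 2√3) − 3(81 − 32√3)c²)ξ − 32(13 + 2√3)c − (163 − 112√3)c³. -/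
/-!
Writing `ψ t = (t² - 1) Q(t²) / 16` with `Q` quadratic, the two nodes `t₁ = √3 - 1`,
`t₂ = 2 - √3` satisfy `t₁ + t₂ = 1`, so Vieta's formulas for the roots `t₁², t₂²` of `Q`
involve only `m = t₁ t₂`. With `q = m (3η - s)` they become `q² = 16 - (3ξ + c)²` and
`8 q s = 9 m (ξ - c)² - 2 q²`; squaring the second one and using `s² = 1 - c²` eliminates
`q` and `s`, leaving a quartic in `ξ` that vanishes at `ξ = c` for every `m`. The remaining
cubic factor is, for `m = 3√3 - 5`, a nonzero multiple of `f`.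
-/

open Real

def errorQuadratic (c s ξ η u : ℝ) : ℝ :=
  (3 * η - s) ^ 2 * u ^ 2 + (16 * s ^ 2 - 9 * (η + s) ^ 2 + 9 * (ξ - c) ^ 2) * u
    + (16 - (3 * ξ + c) ^ 2)

theorem vieta_of_two_roots {R : Type*} [CommRing R] [NoZeroDivisors R] {a b c u v : R}
    (hu : a * u ^ 2 + b * u + c = 0) (hv : a * v ^ 2 + b * v + c = 0) (huv : u ≠ v) :
    b = -(u + v) * a ∧ c = u * v * a := by
  have hb : b = -(u + v) * a := by
    have h : (u - v) * (a * (u + v) + b) = 0 := by linear_combination hu - hv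
    linear_combination (mul_eq_zero.mp h).resolve_left (sub_ne_zero.mpr huv)
  exact ⟨hb, by linear_combination hu - u * hb⟩

theorem errorQuadratic_vieta {c s ξ η t₁ t₂ : ℝ} (hsum : t₁ + t₂ = 1) (hne : t₁ ≠ t₂)
    (h₁ : errorQuadratic c s ξ η (t₁ ^ 2) = 0) (h₂ : errorQuadratic c s ξ η (t₂ ^ 2) = 0) :
    (t₁ * t₂ * (3 * η - s)) ^ 2 = 16 - (3 * ξ + c) ^ 2 ∧
      8 * (t₁ * t₂ * (3 * η - s)) * s
        = 9 * (t₁ * t₂) * (ξ - c) ^ 2 - 2 * (t₁ * t₂ * (3 * η - s)) ^ 2 := by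
  have hsq : t₁ ^ 2 ≠ t₂ ^ 2 := by
    intro h
    exact hne (by linear_combination h - (t₁ - t₂) * hsum)
  obtain ⟨hB, hC⟩ := vieta_of_two_roots h₁ h₂ hsq
  constructor
  · linear_combination -hC
  · linear_combination (-(t₁ * t₂)) * hB + t₁ * t₂ * (3 * η - s) ^ 2 * (t₁ + t₂ + 1) * hsum

theorem sub_mul_cubic_eq_zero {R : Type*} [CommRing R] {c s ξ q m : R}
    (hsc : s ^ 2 + c ^ 2 = 1) (hq : q ^ 2 = 16 - (3 * ξ + c) ^ 2)
    (hqs : 8 * q * s = 9 * m * (ξ - c) ^ 2 - 2 * q ^ 2) :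
    (ξ - c) * ((ξ - c) * (48 * c + (9 * m + 18) * (ξ - c)) ^ 2
      - 576 * (m + 1) * (1 - c ^ 2) * (ξ - c) - 1536 * c * (1 - c ^ 2)) = 0 := by
  linear_combination (-(8 * q * s + 9 * m * (ξ - c) ^ 2 - 2 * q ^ 2)) * hqs
    + (2 * (18 * m * (ξ - c) ^ 2 - 2 * (16 - (3 * ξ + c) ^ 2) - 2 * q ^ 2)
      + 64 * (1 - c ^ 2)) * hq + 64 * q ^ 2 * hsc

theorem cubic_factor_eq_of_sq_eq_three {R : Type*} [CommRing R] {r c ξ : R} (hr : r ^ 2 = 3) :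
    (ξ - c) * (48 * c + (9 * (3 * r - 5) + 18) * (ξ - c)) ^ 2
      - 576 * (3 * r - 5 + 1) * (1 - c ^ 2) * (ξ - c) - 1536 * c * (1 - c ^ 2)
      = (12 - 6 * r) * (243 * ξ ^ 3 - 27 * c * (11 - 16 * r) * ξ ^ 2
        - 3 * (32 * (1 + 2 * r) - 3 * (81 - 32 * r) * c ^ 2) * ξ
        - 32 * (13 + 2 * r) * c - (163 - 112 * r) * c ^ 3) := by
  linear_combination (729 * ξ ^ 3 + 405 * ξ ^ 2 * c + 459 * ξ * c ^ 2 - 57 * c ^ 3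
    - 1152 * ξ - 384 * c) * hr

theorem stmt_6_general (φ : ℝ)
    (c s ξ η : ℝ) (hc : c = Real.cos φ) (hs : s = Real.sin φ) (hξc : ξ ≠ c)
    (ψ : ℝ → ℝ)
    (hψ : ∀ t, ψ t = (1 / 16) * (t ^ 2 - 1) *
      ((3 * η - s) ^ 2 * t ^ 4
        + (16 * s ^ 2 - 9 * (η + s) ^ 2 + 9 * (ξ - c) ^ 2) * t ^ 2
        + (16 - (3 * ξ + c) ^ 2)))
    (h1 : ψ (Real.sqrt 3 - 1) = 0) (h2 : ψ (2 - Real.sqrt 3) = 0) :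
    243 * ξ ^ 3 - 27 * c * (11 - 16 * Real.sqrt 3) * ξ ^ 2
      - 3 * (32 * (1 + 2 * Real.sqrt 3) - 3 * (81 - 32 * Real.sqrt 3) * c ^ 2) * ξ
      - 32 * (13 + 2 * Real.sqrt 3) * c - (163 - 112 * Real.sqrt 3) * c ^ 3 = 0 := by
  have hr : √3 ^ 2 = 3 := sq_sqrt (by norm_num)
  have hr_ne : ∀ a : ℝ, a ^ 2 ≠ 3 → √3 ≠ a := fun a ha h => ha (h ▸ hr)
  have hr_ne_half : √3 ≠ 3 / 2 := hr_ne _ (by norm_num)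
  have hsc : s ^ 2 + c ^ 2 = 1 := by rw [hs, hc]; exact sin_sq_add_cos_sq φ
  have hroot : ∀ t, t ^ 2 ≠ 1 → ψ t = 0 → errorQuadratic c s ξ η (t ^ 2) = 0 := by
    intro t ht h
    have h' : (1 / 16 * (t ^ 2 - 1)) * errorQuadratic c s ξ η (t ^ 2) = 0 := by
      rw [← h, hψ, errorQuadratic]; ring
    exact (mul_eq_zero.mp h').resolve_left (mul_ne_zero (by norm_num) (sub_ne_zero.mpr ht))
  have ht₁ : (√3 - 1) ^ 2 ≠ 1 := fun h => hr_ne_half (by linear_combination (hr - h) / 2)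
  have ht₂ : (2 - √3) ^ 2 ≠ 1 := fun h => hr_ne_half (by linear_combination (hr - h) / 4)
  have hne : √3 - 1 ≠ 2 - √3 := fun h => hr_ne_half (by linear_combination h / 2)
  obtain ⟨hq, hqs⟩ :=
    errorQuadratic_vieta (by ring) hne (hroot _ ht₁ h1) (hroot _ ht₂ h2)
  have hm : (√3 - 1) * (2 - √3) = 3 * √3 - 5 := by linear_combination -hr
  rw [hm] at hq hqs
  have h := sub_mul_cubic_eq_zero hsc hq hqs
  rw [cubic_factor_eq_of_sq_eq_three hr] at h
  have hκ : (12 : ℝ) - 6 * √3 ≠ 0 := fun h => hr_ne 2 (by norm_num) (by linear_combination -h / 6)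
  exact (mul_eq_zero.mp ((mul_eq_zero.mp h).resolve_left (sub_ne_zero.mpr hξc))).resolve_left hκ

/-- If the simplified error function of the cubic G⁰ interpolant vanishes at `√3 − 1`
and `2 − √3` and `ξ ≠ c`, then `ξ` is a root of the resolvent cubic `f`. -/
theorem stmt_6 (φ : ℝ) (hφ : φ ∈ Set.Ioo 0 (π / 2))
    (c s ξ η : ℝ) (hc : c = Real.cos φ) (hs : s = Real.sin φ) (hξc : ξ ≠ c)
    (ψ : ℝ → ℝ)
    (hψ : ∀ t, ψ t = (1 / 16) * (t ^ 2 - 1) *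
      ((3 * η - s) ^ 2 * t ^ 4
        + (16 * s ^ 2 - 9 * (η + s) ^ 2 + 9 * (ξ - c) ^ 2) * t ^ 2
        + (16 - (3 * ξ + c) ^ 2)))
    (h1 : ψ (Real.sqrt 3 - 1) = 0) (h2 : ψ (2 - Real.sqrt 3) = 0) :
    243 * ξ ^ 3 - 27 * c * (11 - 16 * Real.sqrt 3) * ξ ^ 2
      - 3 * (32 * (1 + 2 * Real.sqrt 3) - 3 * (81 - 32 * Real.sqrt 3) * c ^ 2) * ξ
      - 32 * (13 + 2 * Real.sqrt 3) * c - (163 - 112 * Real.sqrt 3) * c ^ 3 = 0 :=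
  stmt_6_general φ c s ξ η hc hs hξc ψ hψ h1 h2
end

section
/- For every c ∈ (0,1), the cubic polynomial f(ξ) = 243ξ³ − 27c(11 − 16√3)ξ² − 3(32(1 + 2√3) − 3(81 − 32√3)c²)ξ − 32(13 + 2√3)c − (163 − 112√3)c³ has exactly one positive real root, and this root lies in the open interval (c, (4+c)/3). -/
/-!
The polynomial `f` has positive leading and quadratic coefficients and a negative constant term.
Dividing `f x - f y` by `x - y` for two positive roots `x ≠ y` expresses the constant term as
`x y (243 (x + y) + 27 c (16 √3 - 11)) > 0`, so there is at most one positive root. One exists in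
`(c, (4 + c) / 3)` by the intermediate value theorem, since `f c = (512 + 256 √3) (c³ - c) < 0`
while `f ((4 + c) / 3)` is a polynomial in `c` with positive coefficients.
-/

open Real Set

theorem cubic_pos_root_unique {a b c d x y : ℝ} (ha : 0 ≤ a) (hb : 0 ≤ b) (hd : d < 0)
    (hx : 0 < x) (hy : 0 < y) (hfx : a * x ^ 3 + b * x ^ 2 + c * x + d = 0)
    (hfy : a * y ^ 3 + b * y ^ 2 + c * y + d = 0) : x = y := by
  by_contra hxy
  have hquot : a * (x ^ 2 + x * y + y ^ 2) + b * (x + y) + c = 0 := by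
    have : (x - y) * (a * (x ^ 2 + x * y + y ^ 2) + b * (x + y) + c) = 0 := by
      linear_combination hfx - hfy
    exact (mul_eq_zero.mp this).resolve_left (sub_ne_zero.mpr hxy)
  have hd_eq : d = x * y * (a * (x + y) + b) := by linear_combination hfx - x * hquot
  have : 0 ≤ x * y * (a * (x + y) + b) := by positivity
  linarith

theorem existsUnique_pos_root_and_mem_Ioo {f : ℝ → ℝ} {l u : ℝ} (hl : 0 ≤ l) (hlu : l ≤ u)
    (hf : ContinuousOn f (Icc l u)) (hfl : f l < 0) (hfu : 0 < f u)
    (huniq : ∀ x y, 0 < x → 0 < y → f x = 0 → f y = 0 → x = y) :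
    (∃! ξ, 0 < ξ ∧ f ξ = 0) ∧ ∀ ξ, 0 < ξ → f ξ = 0 → ξ ∈ Ioo l u := by
  obtain ⟨ξ₀, hξ₀, hroot⟩ := intermediate_value_Ioo hlu hf ⟨hfl, hfu⟩
  have hpos : 0 < ξ₀ := hl.trans_lt hξ₀.1
  refine ⟨⟨ξ₀, ⟨hpos, hroot⟩, fun ξ hξ => huniq ξ ξ₀ hξ.1 hpos hξ.2 hroot⟩, ?_⟩
  intro ξ hξ hξroot
  rwa [huniq ξ ξ₀ hξ hpos hξroot hroot]

theorem sqrt_three_gt : 1.73 < √3 :=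
  (Real.lt_sqrt (by norm_num)).mpr (by norm_num)

theorem sqrt_three_lt : √3 < 1.75 :=
  (Real.sqrt_lt' (by norm_num)).mpr (by norm_num)

noncomputable def resolventCubic (c ξ : ℝ) : ℝ :=
  243 * ξ ^ 3 - 27 * c * (11 - 16 * √3) * ξ ^ 2
    - 3 * (32 * (1 + 2 * √3) - 3 * (81 - 32 * √3) * c ^ 2) * ξ
    - 32 * (13 + 2 * √3) * c - (163 - 112 * √3) * c ^ 3

section

variable {c : ℝ}

theorem continuous_resolventCubic (c : ℝ) : Continuous (resolventCubic c) := by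
  unfold resolventCubic
  fun_prop

theorem resolventCubic_self_neg (hc0 : 0 < c) (hc1 : c < 1) : resolventCubic c c < 0 := by
  have hfactor : resolventCubic c c = (512 + 256 * √3) * (c ^ 3 - c) := by
    unfold resolventCubic; ring
  have hcube : c ^ 3 - c < 0 := by
    have : c ^ 3 - c = c * ((c - 1) * (c + 1)) := by ring
    rw [this]
    exact mul_neg_of_pos_of_neg hc0 (mul_neg_of_neg_of_pos (by linarith) (by linarith))
  rw [hfactor]
  exact mul_neg_of_pos_of_neg (by positivity) hcube

theorem resolventCubic_pos_at_upper (hc0 : 0 ≤ c) : 0 < resolventCubic c ((4 + c) / 3) := by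
  have hexpand : resolventCubic c ((4 + c) / 3) =
      (448 - 256 * √3) + (640 * √3 - 544) * c + 816 * c ^ 2 + (56 + 64 * √3) * c ^ 3 := by
    unfold resolventCubic; ring
  have h₁ := sqrt_three_gt
  have h₂ := sqrt_three_lt
  rw [hexpand]
  have : 0 ≤ (640 * √3 - 544) * c := mul_nonneg (by linarith) hc0
  have : 0 ≤ (56 + 64 * √3) * c ^ 3 := by positivity
  nlinarith [sq_nonneg c]

theorem resolventCubic_pos_root_unique (hc0 : 0 < c) (hc1 : c < 1) {x y : ℝ} (hx : 0 < x)
    (hy : 0 < y) (hfx : resolventCubic c x = 0) (hfy : resolventCubic c y = 0) : x = y := by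
  have hbracket : 0 < 416 + 64 * √3 + (163 - 112 * √3) * c ^ 2 := by
    have h₁ := sqrt_three_gt
    have h₂ := sqrt_three_lt
    have hc2 : c ^ 2 < 1 := by nlinarith
    nlinarith
  unfold resolventCubic at hfx hfy
  refine cubic_pos_root_unique (a := 243) (b := 27 * c * (16 * √3 - 11))
    (c := -3 * (32 * (1 + 2 * √3) - 3 * (81 - 32 * √3) * c ^ 2))
    (d := -32 * (13 + 2 * √3) * c - (163 - 112 * √3) * c ^ 3) (by norm_num)
    (mul_nonneg (by positivity) (by linarith [sqrt_three_gt])) ?_ hx hy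
    (by linear_combination hfx) (by linear_combination hfy)
  nlinarith [mul_pos hc0 hbracket]

end

/-- For every `c ∈ (0,1)`, the resolvent cubic `f` of the cubic G⁰ interpolation problem
has exactly one positive real root, and this root lies in `(c, (4+c)/3)`. -/
theorem stmt_7 (c : ℝ) (hc : c ∈ Set.Ioo (0 : ℝ) 1)
    (f : ℝ → ℝ)
    (hf : ∀ ξ, f ξ = 243 * ξ ^ 3 - 27 * c * (11 - 16 * Real.sqrt 3) * ξ ^ 2
      - 3 * (32 * (1 + 2 * Real.sqrt 3) - 3 * (81 - 32 * Real.sqrt 3) * c ^ 2) * ξ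
      - 32 * (13 + 2 * Real.sqrt 3) * c - (163 - 112 * Real.sqrt 3) * c ^ 3) :
    (∃! ξ : ℝ, 0 < ξ ∧ f ξ = 0) ∧
      ∀ ξ : ℝ, 0 < ξ → f ξ = 0 → ξ ∈ Set.Ioo c ((4 + c) / 3) := by
  obtain ⟨hc0, hc1⟩ := hc
  obtain rfl : f = resolventCubic c := funext fun ξ => by rw [hf]; rfl
  exact existsUnique_pos_root_and_mem_Ioo hc0.le (by linarith)
    (continuous_resolventCubic c).continuousOn (resolventCubic_self_neg hc0 hc1)
    (resolventCubic_pos_at_upper hc0.le) fun x y hx hy => resolventCubic_pos_root_unique hc0 hc1 hx hy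
end

section
/- Let φ ∈ (0, π/2], c = cos φ, s = sin φ, α, β, γ ∈ ℝ, and let ψ(t) = −1 + (1/64)(4(1−t⁴)α + 3(1−t²)²γ + (1 + 6t² + t⁴)c)² + (1/4)t²(2(1−t²)β + (1+t²)s)². Set u_1 = √(2(2+√2)) − 1 − √2, u_2 = √(2+√2) − 1, u_3 = 1 + √2 − √(2+√2). If ψ(u_1) = ψ(u_2) = ψ(u_3) = 0, then, with x = 4α − 3γ − c and y = 4α + 3γ + c, it holds that 64 + u_1²u_2²u_3²·x² − y² = 0. -/
/-!
Put `v = t²`. Then `64 ψ(t)` is a quartic in `v` with leading coefficient `x²` and constant term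
`y² − 64`. Besides `u₁², u₂², u₃²` it also vanishes at `v = 1`, because `c² + s² = 1`. A quartic
with four distinct roots `vᵢ` is `x² ∏ (v − vᵢ)`, so comparing constant terms gives
`y² − 64 = x² u₁² u₂² u₃²`.
-/

open Real Polynomial Finset

theorem Polynomial.eq_C_coeff_mul_prod_X_sub_C_of_isRoot {R : Type*} [CommRing R] [IsDomain R]
    {n : ℕ} {p : R[X]} (hp : p.natDegree ≤ n) {v : Fin n → R} (hv : Function.Injective v)
    (hroot : ∀ i, p.IsRoot (v i)) : p = C (p.coeff n) * ∏ i, (X - C (v i)) := by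
  set q : R[X] := ∏ i, (X - C (v i))
  have hq : q.Monic := monic_prod_X_sub_C v univ
  have hq_deg : q.natDegree = n := by simp [q, natDegree_finsetProd_X_sub_C_eq_card]
  rw [← sub_eq_zero]
  refine eq_zero_of_degree_lt_of_eval_index_eq_zero univ hv.injOn ?_ fun i _ => ?_
  · rw [card_univ, Fintype.card_fin, degree_lt_iff_coeff_zero]
    intro m hm
    rcases hm.eq_or_lt with rfl | hm
    · simp [coeff_C_mul, ← hq_deg, hq.coeff_natDegree]
    · simp [coeff_C_mul, coeff_eq_zero_of_natDegree_lt (hp.trans_lt hm),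
        coeff_eq_zero_of_natDegree_lt (hq_deg.trans_lt hm)]
  · simp [q, eval_prod, (hroot i).eq_zero, prod_eq_zero (mem_univ i)]

theorem quartic_constCoeff_eq_mul_prod_roots {R : Type*} [CommRing R] [IsDomain R]
    {a b c d e : R} {v : Fin 4 → R} (hv : Function.Injective v)
    (hroot : ∀ i, a * v i ^ 4 + b * v i ^ 3 + c * v i ^ 2 + d * v i + e = 0) :
    e = a * ∏ i, v i := by
  set p : R[X] := C a * X ^ 4 + C b * X ^ 3 + C c * X ^ 2 + C d * X + C e
  have hp : p.natDegree ≤ 4 := by simp only [p]; compute_degree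
  have hp_eq := eq_C_coeff_mul_prod_X_sub_C_of_isRoot hp hv fun i => by simpa [p] using hroot i
  calc e = p.eval 0 := by simp [p]
    _ = (C (p.coeff 4) * ∏ i, (X - C (v i))).eval 0 := by rw [← hp_eq]
    _ = a * ∏ i, v i := by simp [p, eval_prod, prod_neg, Even.neg_one_pow ⟨2, rfl⟩]

theorem chebyshev_nodes_ordered :
    0 < √(2 * (2 + √2)) - 1 - √2 ∧ √(2 * (2 + √2)) - 1 - √2 < 1 + √2 - √(2 + √2) ∧
      1 + √2 - √(2 + √2) < √(2 + √2) - 1 ∧ √(2 + √2) - 1 < 1 := by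
  rw [sqrt_mul zero_le_two]
  have hr2 : √2 ^ 2 = 2 := sq_sqrt zero_le_two
  have ht2 : √(2 + √2) ^ 2 = 2 + √2 := sq_sqrt (by positivity)
  set r := √2
  set t := √(2 + r)
  have hr : 1 < r ∧ r < 3 / 2 := by constructor <;> nlinarith [sqrt_nonneg 2]
  have ht : 1 < t ∧ t < 2 := by constructor <;> nlinarith [sqrt_nonneg (2 + r)]
  refine ⟨?_, by nlinarith, by nlinarith, by linarith⟩
  -- `u₁ = 1 / (√2 √(2 + √2) + 1 + √2)`
  have key : (r * t - (1 + r)) * (r * t + (1 + r)) = 1 := by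
    linear_combination t ^ 2 * hr2 + 2 * ht2 - hr2
  nlinarith

theorem stmt_10_general (φ : ℝ)
    (c s α β γ : ℝ) (hc : c = Real.cos φ) (hs : s = Real.sin φ)
    (ψ : ℝ → ℝ)
    (hψ : ∀ t, ψ t = -1
      + (1 / 64) * (4 * (1 - t ^ 4) * α + 3 * (1 - t ^ 2) ^ 2 * γ
          + (1 + 6 * t ^ 2 + t ^ 4) * c) ^ 2
      + (1 / 4) * t ^ 2 * (2 * (1 - t ^ 2) * β + (1 + t ^ 2) * s) ^ 2)
    (u1 u2 u3 : ℝ)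
    (hu1 : u1 = Real.sqrt (2 * (2 + Real.sqrt 2)) - 1 - Real.sqrt 2)
    (hu2 : u2 = Real.sqrt (2 + Real.sqrt 2) - 1)
    (hu3 : u3 = 1 + Real.sqrt 2 - Real.sqrt (2 + Real.sqrt 2))
    (h1 : ψ u1 = 0) (h2 : ψ u2 = 0) (h3 : ψ u3 = 0)
    (x y : ℝ) (hx : x = 4 * α - 3 * γ - c) (hy : y = 4 * α + 3 * γ + c) :
    64 + u1 ^ 2 * u2 ^ 2 * u3 ^ 2 * x ^ 2 - y ^ 2 = 0 := by
  have hroot : ∀ t, ψ t = 0 →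
      x ^ 2 * (t ^ 2) ^ 4 + (16 * (s - 2 * β) ^ 2 - 12 * x * (c - γ)) * (t ^ 2) ^ 3
        + (36 * (c - γ) ^ 2 - 2 * x * y + 32 * (2 * β + s) * (s - 2 * β)) * (t ^ 2) ^ 2
        + (12 * y * (c - γ) + 16 * (2 * β + s) ^ 2) * t ^ 2 + (y ^ 2 - 64) = 0 := fun t ht => by
    rw [hψ] at ht
    rw [hx, hy]
    linear_combination 64 * ht
  have hψ_one : ψ 1 = 0 := by
    rw [hψ, hc, hs]
    linear_combination cos_sq_add_sin_sq φ
  obtain ⟨hu1_pos, hu13, hu32, hu2_lt⟩ := hu1 ▸ hu2 ▸ hu3 ▸ chebyshev_nodes_ordered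
  have hu3_pos := hu1_pos.trans hu13
  have hu2_pos := hu3_pos.trans hu32
  have hv : StrictMono ![u1 ^ 2, u3 ^ 2, u2 ^ 2, 1 ^ 2] := by
    refine Fin.strictMono_iff_lt_succ.2 fun i => ?_
    fin_cases i
    · exact (pow_lt_pow_left₀ hu13 hu1_pos.le two_ne_zero : u1 ^ 2 < u3 ^ 2)
    · exact (pow_lt_pow_left₀ hu32 hu3_pos.le two_ne_zero : u3 ^ 2 < u2 ^ 2)
    · exact (pow_lt_pow_left₀ hu2_lt hu2_pos.le two_ne_zero : u2 ^ 2 < 1 ^ 2)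
  have hconst := quartic_constCoeff_eq_mul_prod_roots hv.injective fun i => by
    fin_cases i
    exacts [hroot u1 h1, hroot u3 h3, hroot u2 h2, hroot 1 hψ_one]
  simp only [Fin.prod_univ_four, Matrix.cons_val] at hconst
  linear_combination -hconst

/-- Equation (3) of the paper: if the simplified error function of the quartic G⁰
interpolant vanishes at `u₁, u₂, u₃`, then with `x = 4α − 3γ − c` and `y = 4α + 3γ + c`,
`64 + u₁²u₂²u₃²x² − y² = 0`. -/
theorem stmt_10 (φ : ℝ) (hφ : φ ∈ Set.Ioc 0 (π / 2))
    (c s α β γ : ℝ) (hc : c = Real.cos φ) (hs : s = Real.sin φ)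
    (ψ : ℝ → ℝ)
    (hψ : ∀ t, ψ t = -1
      + (1 / 64) * (4 * (1 - t ^ 4) * α + 3 * (1 - t ^ 2) ^ 2 * γ
          + (1 + 6 * t ^ 2 + t ^ 4) * c) ^ 2
      + (1 / 4) * t ^ 2 * (2 * (1 - t ^ 2) * β + (1 + t ^ 2) * s) ^ 2)
    (u1 u2 u3 : ℝ)
    (hu1 : u1 = Real.sqrt (2 * (2 + Real.sqrt 2)) - 1 - Real.sqrt 2)
    (hu2 : u2 = Real.sqrt (2 + Real.sqrt 2) - 1)
    (hu3 : u3 = 1 + Real.sqrt 2 - Real.sqrt (2 + Real.sqrt 2))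
    (h1 : ψ u1 = 0) (h2 : ψ u2 = 0) (h3 : ψ u3 = 0)
    (x y : ℝ) (hx : x = 4 * α - 3 * γ - c) (hy : y = 4 * α + 3 * γ + c) :
    64 + u1 ^ 2 * u2 ^ 2 * u3 ^ 2 * x ^ 2 - y ^ 2 = 0 :=
  stmt_10_general φ c s α β γ hc hs ψ hψ u1 u2 u3 hu1 hu2 hu3 h1 h2 h3 x y hx hy
end

section
/- Let φ ∈ (0, π/2], c = cos φ, s = sin φ, α, β, γ ∈ ℝ, and let ψ(t) = −1 + (1/64)(4(1−t⁴)α + 3(1−t²)²γ + (1 + 6t² + t⁴)c)² + (1/4)t²(2(1−t²)β + (1+t²)s)². Set u_1 = √(2(2+√2)) − 1 − √2, u_2 = √(2+√2) − 1, u_3 = 1 + √2 − √(2+√2), and σ_3 = (1−u_1²)(1−u_2²)(1−u_3²). If ψ(u_1) = ψ(u_2) = ψ(u_3) = 0, then, with x = 4α − 3γ − c and y = 4α + 3γ + c, it holds that −1 + (σ_3/128)x² + (c/8)(x+y) + βs = 0. -/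
open Real

/-! Since `ψ` is even of degree 8, `ψ t = Q (t²)` for a quartic `Q` with leading coefficient
`x² / 64`. As `Q 1 = c² + s² - 1 = 0` and `0 < u₁ < u₃ < u₂ < 1`, `Q` has the four distinct
roots `1, u₁², u₂², u₃²`. Hence `Q'(1) = (x² / 64) σ₃`, while a direct computation gives
`Q'(1) = 2 - c (x + y) / 4 - 2 β s`. -/

section Roots

variable {K : Type*} [Field K]

theorem cubic_eq_mul_of_roots {a b c d r₁ r₂ r₃ : K}
    (h₁₂ : r₁ ≠ r₂) (h₁₃ : r₁ ≠ r₃) (h₂₃ : r₂ ≠ r₃)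
    (h₁ : a * r₁ ^ 3 + b * r₁ ^ 2 + c * r₁ + d = 0)
    (h₂ : a * r₂ ^ 3 + b * r₂ ^ 2 + c * r₂ + d = 0)
    (h₃ : a * r₃ ^ 3 + b * r₃ ^ 2 + c * r₃ + d = 0) (t : K) :
    a * t ^ 3 + b * t ^ 2 + c * t + d = a * (t - r₁) * (t - r₂) * (t - r₃) := by
  have hΔ : (r₁ - r₂) * (r₁ - r₃) * (r₂ - r₃) ≠ 0 := by
    simp only [ne_eq, mul_eq_zero, sub_eq_zero, not_or]
    exact ⟨⟨h₁₂, h₁₃⟩, h₂₃⟩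
  refine mul_left_cancel₀ hΔ ?_
  -- Lagrange interpolation of the quadratic difference at the three nodes, denominators cleared
  linear_combination (t - r₂) * (t - r₃) * (r₂ - r₃) * h₁ - (t - r₁) * (t - r₃) * (r₁ - r₃) * h₂
    + (t - r₁) * (t - r₂) * (r₁ - r₂) * h₃

theorem quartic_deriv_eq_mul_of_roots {a b c d e ρ r₁ r₂ r₃ : K}
    (hρ₁ : r₁ ≠ ρ) (hρ₂ : r₂ ≠ ρ) (hρ₃ : r₃ ≠ ρ)
    (h₁₂ : r₁ ≠ r₂) (h₁₃ : r₁ ≠ r₃) (h₂₃ : r₂ ≠ r₃)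
    (hρ : a * ρ ^ 4 + b * ρ ^ 3 + c * ρ ^ 2 + d * ρ + e = 0)
    (h₁ : a * r₁ ^ 4 + b * r₁ ^ 3 + c * r₁ ^ 2 + d * r₁ + e = 0)
    (h₂ : a * r₂ ^ 4 + b * r₂ ^ 3 + c * r₂ ^ 2 + d * r₂ + e = 0)
    (h₃ : a * r₃ ^ 4 + b * r₃ ^ 3 + c * r₃ ^ 2 + d * r₃ + e = 0) :
    4 * a * ρ ^ 3 + 3 * b * ρ ^ 2 + 2 * c * ρ + d = a * (ρ - r₁) * (ρ - r₂) * (ρ - r₃) := by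
  have hdiv : ∀ t, a * t ^ 4 + b * t ^ 3 + c * t ^ 2 + d * t + e = (t - ρ) *
      (a * t ^ 3 + (b + a * ρ) * t ^ 2 + (c + b * ρ + a * ρ ^ 2) * t
        + (d + c * ρ + b * ρ ^ 2 + a * ρ ^ 3)) :=
    fun t => by linear_combination hρ
  have hquot : ∀ r, r ≠ ρ → a * r ^ 4 + b * r ^ 3 + c * r ^ 2 + d * r + e = 0 →
      a * r ^ 3 + (b + a * ρ) * r ^ 2 + (c + b * ρ + a * ρ ^ 2) * r
        + (d + c * ρ + b * ρ ^ 2 + a * ρ ^ 3) = 0 :=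
    fun r hr h => ((mul_eq_zero.mp ((hdiv r).symm.trans h)).resolve_left (sub_ne_zero.mpr hr))
  linear_combination cubic_eq_mul_of_roots h₁₂ h₁₃ h₂₃
    (hquot r₁ hρ₁ h₁) (hquot r₂ hρ₂ h₂) (hquot r₃ hρ₃ h₃) ρ

end Roots

theorem radialError_eq_quartic (α β γ c s t : ℝ) :
    -1 + (1 / 64) * (4 * (1 - t ^ 4) * α + 3 * (1 - t ^ 2) ^ 2 * γ
          + (1 + 6 * t ^ 2 + t ^ 4) * c) ^ 2
      + (1 / 4) * t ^ 2 * (2 * (1 - t ^ 2) * β + (1 + t ^ 2) * s) ^ 2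
    = (4 * α - 3 * γ - c) ^ 2 / 64 * (t ^ 2) ^ 4
      + (-3 * (c - γ) * (4 * α - 3 * γ - c) / 16 + (s - 2 * β) ^ 2 / 4) * (t ^ 2) ^ 3
      + (9 * (c - γ) ^ 2 / 16 - (4 * α - 3 * γ - c) * (4 * α + 3 * γ + c) / 32
          + (s ^ 2 - 4 * β ^ 2) / 2) * (t ^ 2) ^ 2
      + (3 * (c - γ) * (4 * α + 3 * γ + c) / 16 + (s + 2 * β) ^ 2 / 4) * t ^ 2
      + ((4 * α + 3 * γ + c) ^ 2 / 64 - 1) := by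
  ring

theorem scaled_chebyshev_nodes_sq_lt :
    (√(2 * (2 + √2)) - 1 - √2) ^ 2 < (1 + √2 - √(2 + √2)) ^ 2 ∧
      (1 + √2 - √(2 + √2)) ^ 2 < (√(2 + √2) - 1) ^ 2 ∧ (√(2 + √2) - 1) ^ 2 < 1 := by
  set r := √2
  set q := √(2 + r)
  have hr : r ^ 2 = 2 := sq_sqrt zero_le_two
  have hq : q ^ 2 = 2 + r := sq_sqrt (by positivity)
  have hr0 : 0 < r := by positivity
  have hq0 : 0 < q := by positivity
  have hr2 : r < 2 := by nlinarith
  have hq2 : q < 2 := by nlinarith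
  rw [sqrt_mul zero_le_two]
  have hu1 : 0 < r * q - 1 - r := by nlinarith
  have hu13 : r * q - 1 - r < 1 + r - q := by nlinarith
  have hu32 : 1 + r - q < q - 1 := by nlinarith
  exact ⟨pow_lt_pow_left₀ hu13 hu1.le two_ne_zero, pow_lt_pow_left₀ hu32 (by linarith) two_ne_zero,
    pow_lt_one₀ (by linarith) (by linarith) two_ne_zero⟩

theorem stmt_11_general (φ : ℝ)
    (c s α β γ : ℝ) (hc : c = Real.cos φ) (hs : s = Real.sin φ)
    (ψ : ℝ → ℝ)
    (hψ : ∀ t, ψ t = -1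
      + (1 / 64) * (4 * (1 - t ^ 4) * α + 3 * (1 - t ^ 2) ^ 2 * γ
          + (1 + 6 * t ^ 2 + t ^ 4) * c) ^ 2
      + (1 / 4) * t ^ 2 * (2 * (1 - t ^ 2) * β + (1 + t ^ 2) * s) ^ 2)
    (u1 u2 u3 σ3 : ℝ)
    (hu1 : u1 = Real.sqrt (2 * (2 + Real.sqrt 2)) - 1 - Real.sqrt 2)
    (hu2 : u2 = Real.sqrt (2 + Real.sqrt 2) - 1)
    (hu3 : u3 = 1 + Real.sqrt 2 - Real.sqrt (2 + Real.sqrt 2))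
    (hσ3 : σ3 = (1 - u1 ^ 2) * (1 - u2 ^ 2) * (1 - u3 ^ 2))
    (h1 : ψ u1 = 0) (h2 : ψ u2 = 0) (h3 : ψ u3 = 0)
    (x y : ℝ) (hx : x = 4 * α - 3 * γ - c) (hy : y = 4 * α + 3 * γ + c) :
    -1 + (σ3 / 128) * x ^ 2 + (c / 8) * (x + y) + β * s = 0 := by
  have hcs : c ^ 2 + s ^ 2 = 1 := by rw [hc, hs]; exact cos_sq_add_sin_sq φ
  obtain ⟨h13, h32, h2one⟩ := scaled_chebyshev_nodes_sq_lt
  rw [← hu1, ← hu3] at h13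
  rw [← hu2, ← hu3] at h32
  rw [← hu2] at h2one
  simp only [hψ, radialError_eq_quartic] at h1 h2 h3
  have hderiv := quartic_deriv_eq_mul_of_roots (ρ := 1) (by linarith) h2one.ne (by linarith)
    (by linarith) h13.ne h32.ne' (by linear_combination hcs) h1 h2 h3
  subst hx hy hσ3
  linear_combination (-1 / 2) * hderiv + hcs

/-- Equation (4) of the paper: if the simplified error function of the quartic G⁰
interpolant vanishes at `u₁, u₂, u₃`, then with `x = 4α − 3γ − c`, `y = 4α + 3γ + c` and
`σ₃ = (1−u₁²)(1−u₂²)(1−u₃²)`, it holds that `−1 + (σ₃/128)x² + (c/8)(x+y) + βs = 0`. -/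
theorem stmt_11 (φ : ℝ) (hφ : φ ∈ Set.Ioc 0 (π / 2))
    (c s α β γ : ℝ) (hc : c = Real.cos φ) (hs : s = Real.sin φ)
    (ψ : ℝ → ℝ)
    (hψ : ∀ t, ψ t = -1
      + (1 / 64) * (4 * (1 - t ^ 4) * α + 3 * (1 - t ^ 2) ^ 2 * γ
          + (1 + 6 * t ^ 2 + t ^ 4) * c) ^ 2
      + (1 / 4) * t ^ 2 * (2 * (1 - t ^ 2) * β + (1 + t ^ 2) * s) ^ 2)
    (u1 u2 u3 σ3 : ℝ)
    (hu1 : u1 = Real.sqrt (2 * (2 + Real.sqrt 2)) - 1 - Real.sqrt 2)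
    (hu2 : u2 = Real.sqrt (2 + Real.sqrt 2) - 1)
    (hu3 : u3 = 1 + Real.sqrt 2 - Real.sqrt (2 + Real.sqrt 2))
    (hσ3 : σ3 = (1 - u1 ^ 2) * (1 - u2 ^ 2) * (1 - u3 ^ 2))
    (h1 : ψ u1 = 0) (h2 : ψ u2 = 0) (h3 : ψ u3 = 0)
    (x y : ℝ) (hx : x = 4 * α - 3 * γ - c) (hy : y = 4 * α + 3 * γ + c) :
    -1 + (σ3 / 128) * x ^ 2 + (c / 8) * (x + y) + β * s = 0 :=
  stmt_11_general φ c s α β γ hc hs ψ hψ u1 u2 u3 σ3 hu1 hu2 hu3 hσ3 h1 h2 h3 x y hx hy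
end

section
/- Let φ ∈ (0, π/2], c = cos φ, s = sin φ, α, β, γ ∈ ℝ, and let ψ(t) = −1 + (1/64)(4(1−t⁴)α + 3(1−t²)²γ + (1 + 6t² + t⁴)c)² + (1/4)t²(2(1−t²)β + (1+t²)s)². Set u_1 = √(2(2+√2)) − 1 − √2, u_2 = √(2+√2) − 1, u_3 = 1 + √2 − √(2+√2), σ_1 = (1−u_1²)+(1−u_2²)+(1−u_3²), σ_2 = (1−u_1²)(1−u_2²)+(1−u_1²)(1−u_3²)+(1−u_2²)(1−u_3²), σ_3 = (1−u_1²)(1−u_2²)(1−u_3²). If ψ(u_1) = ψ(u_2) = ψ(u_3) = 0, then, with x = 4α − 3γ − c and y = 4α + 3γ + c, it holds that 0 = (−x/32 + c/8 + c³/8 − (σ_3/512)c x²)·y − (1/4)·(((σ_3/64)x² + (c/4)x − s²)² − (1/16)(1 − σ_2 + 2σ_3)c²x² + (1/16)(2 − σ_1)x² − c(x − 8c)). -/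
/-!
In the variable `w = 1 - t²` the function `ψ` is `w` times a cubic in `w` (its constant term is
`s² + c² - 1 = 0`). The nodes give three distinct nonzero roots `wᵢ = 1 - uᵢ²` of that cubic, so
by Vieta its coefficients are `-σ₃, σ₂, -σ₁` times the leading one `x² / 64`. Of these three
relations one is linear and one quadratic in `β`; squaring the linear one eliminates `β`, and a
multiple of the remaining one cancels the `α²` term, leaving an identity linear in `y`.
-/

open Real

theorem chebyshev_nodes_order {u₁ u₂ u₃ : ℝ}
    (hu₁ : u₁ = √(2 * (2 + √2)) - 1 - √2) (hu₂ : u₂ = √(2 + √2) - 1)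
    (hu₃ : u₃ = 1 + √2 - √(2 + √2)) :
    0 < u₁ ∧ u₁ < u₃ ∧ u₃ < u₂ ∧ u₂ < 1 := by
  have hq : √2 ^ 2 = 2 := sq_sqrt (by norm_num)
  have hr : √(2 + √2) ^ 2 = 2 + √2 := sq_sqrt (by positivity)
  have hq₀ := sqrt_nonneg 2
  have hr₀ := sqrt_nonneg (2 + √2)
  have hq₁ : 1.414 < √2 := by nlinarith
  have hq₂ : √2 < 1.415 := by nlinarith
  have hr₁ : 1.847 < √(2 + √2) := by nlinarith
  have hr₂ : √(2 + √2) < 1.848 := by nlinarith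
  rw [sqrt_mul zero_le_two] at hu₁
  subst hu₁ hu₂ hu₃
  refine ⟨?_, ?_, ?_, ?_⟩ <;> nlinarith

theorem cubic_coeffs_of_three_roots {R : Type*} [CommRing R] [IsDomain R]
    {p₀ p₁ p₂ p₃ w₁ w₂ w₃ : R} (h₁₂ : w₁ ≠ w₂) (h₁₃ : w₁ ≠ w₃) (h₂₃ : w₂ ≠ w₃)
    (h₁ : p₀ + p₁ * w₁ + p₂ * w₁ ^ 2 + p₃ * w₁ ^ 3 = 0)
    (h₂ : p₀ + p₁ * w₂ + p₂ * w₂ ^ 2 + p₃ * w₂ ^ 3 = 0)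
    (h₃ : p₀ + p₁ * w₃ + p₂ * w₃ ^ 2 + p₃ * w₃ ^ 3 = 0) :
    p₂ = -p₃ * (w₁ + w₂ + w₃) ∧ p₁ = p₃ * (w₁ * w₂ + w₁ * w₃ + w₂ * w₃) ∧
      p₀ = -p₃ * (w₁ * w₂ * w₃) := by
  have d₁₂ : p₁ + p₂ * (w₁ + w₂) + p₃ * (w₁ ^ 2 + w₁ * w₂ + w₂ ^ 2) = 0 :=
    (mul_eq_zero.1 (by linear_combination h₁ - h₂ : (w₁ - w₂) * _ = 0)).resolve_left
      (sub_ne_zero.2 h₁₂)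
  have d₁₃ : p₁ + p₂ * (w₁ + w₃) + p₃ * (w₁ ^ 2 + w₁ * w₃ + w₃ ^ 2) = 0 :=
    (mul_eq_zero.1 (by linear_combination h₁ - h₃ : (w₁ - w₃) * _ = 0)).resolve_left
      (sub_ne_zero.2 h₁₃)
  have e : p₂ + p₃ * (w₁ + w₂ + w₃) = 0 :=
    (mul_eq_zero.1 (by linear_combination d₁₂ - d₁₃ : (w₂ - w₃) * _ = 0)).resolve_left
      (sub_ne_zero.2 h₂₃)
  refine ⟨by linear_combination e, by linear_combination d₁₂ - (w₁ + w₂) * e, ?_⟩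
  linear_combination h₁ - w₁ * d₁₂ + w₁ * w₂ * e

theorem radialError_eq_mul_cubic {α β γ c s : ℝ} (hcs : s ^ 2 + c ^ 2 = 1) {t w : ℝ}
    (hw : t ^ 2 = 1 - w) :
    -1 + (1 / 64) * (4 * (1 - t ^ 4) * α + 3 * (1 - t ^ 2) ^ 2 * γ
          + (1 + 6 * t ^ 2 + t ^ 4) * c) ^ 2
      + (1 / 4) * t ^ 2 * (2 * (1 - t ^ 2) * β + (1 + t ^ 2) * s) ^ 2 =
    w * ((2 * (α - c) * c + 2 * (β - s / 2) * s - s ^ 2)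
      + ((α - c) ^ 2 - c * (4 * α - 3 * γ - c) / 4 + (β - s / 2) ^ 2 - 2 * (β - s / 2) * s) * w
      + (-(α - c) * (4 * α - 3 * γ - c) / 4 - (β - s / 2) ^ 2) * w ^ 2
      + (4 * α - 3 * γ - c) ^ 2 / 64 * w ^ 3) := by
  have ht4 : t ^ 4 = (1 - w) ^ 2 := by rw [← hw]; ring
  rw [ht4, hw]
  linear_combination hcs

theorem radialError_cubic_eq_zero {α β γ c s : ℝ} (hcs : s ^ 2 + c ^ 2 = 1) {t w : ℝ}
    (hw : t ^ 2 = 1 - w) (hw₀ : w ≠ 0)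
    (h : -1 + (1 / 64) * (4 * (1 - t ^ 4) * α + 3 * (1 - t ^ 2) ^ 2 * γ
          + (1 + 6 * t ^ 2 + t ^ 4) * c) ^ 2
      + (1 / 4) * t ^ 2 * (2 * (1 - t ^ 2) * β + (1 + t ^ 2) * s) ^ 2 = 0) :
    (2 * (α - c) * c + 2 * (β - s / 2) * s - s ^ 2)
      + ((α - c) ^ 2 - c * (4 * α - 3 * γ - c) / 4 + (β - s / 2) ^ 2 - 2 * (β - s / 2) * s) * w
      + (-(α - c) * (4 * α - 3 * γ - c) / 4 - (β - s / 2) ^ 2) * w ^ 2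
      + (4 * α - 3 * γ - c) ^ 2 / 64 * w ^ 3 = 0 := by
  rw [radialError_eq_mul_cubic hcs hw] at h
  exact (mul_eq_zero.1 h).resolve_left hw₀

theorem relation_of_radialError_vieta {a b c s x y σ₁ σ₂ σ₃ : ℝ} (hcs : s ^ 2 + c ^ 2 = 1)
    (hxy : x + y = 8 * (a + c))
    (h₂ : -a * x / 4 - b ^ 2 = -(x ^ 2 / 64) * σ₁)
    (h₁ : a ^ 2 - c * x / 4 + b ^ 2 - 2 * b * s = x ^ 2 / 64 * σ₂)
    (h₀ : 2 * a * c + 2 * b * s - s ^ 2 = -(x ^ 2 / 64) * σ₃) :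
    0 = (-x / 32 + c / 8 + c ^ 3 / 8 - (σ₃ / 512) * c * x ^ 2) * y
      - (1 / 4) * (((σ₃ / 64) * x ^ 2 + (c / 4) * x - s ^ 2) ^ 2
        - (1 / 16) * (1 - σ₂ + 2 * σ₃) * c ^ 2 * x ^ 2
        + (1 / 16) * (2 - σ₁) * x ^ 2 - c * (x - 8 * c)) := by
  have hb2s : 2 * b * s = s ^ 2 - 2 * a * c - x ^ 2 / 64 * σ₃ := by linear_combination h₀
  have F₁ : a ^ 2 + 2 * a * c - a * x / 4 - c * x / 4 - s ^ 2
      + x ^ 2 / 64 * (σ₁ + σ₃ - σ₂) = 0 := by linear_combination h₁ + h₂ + h₀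
  have F₂ : (s ^ 2 - 2 * a * c - x ^ 2 / 64 * σ₃) ^ 2
      - 4 * s ^ 2 * (x ^ 2 / 64 * σ₁ - a * x / 4) = 0 := by
    linear_combination (-4 * s ^ 2) * h₂ - (2 * b * s + (s ^ 2 - 2 * a * c - x ^ 2 / 64 * σ₃)) * hb2s
  -- `F₂ - 4c²F₁` has no `a²` term, and `a` enters it only through `a = (x + y) / 8 - c`.
  obtain rfl : y = 8 * (a + c) - x := by linear_combination hxy
  rw [show s ^ 2 = 1 - c ^ 2 by linear_combination hcs] at F₁ F₂ ⊢
  linear_combination (1 / 4) * (F₂ - 4 * c ^ 2 * F₁)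

theorem stmt_12_general (φ : ℝ) (c s α β γ : ℝ) (hc : c = Real.cos φ) (hs : s = Real.sin φ)
    (ψ : ℝ → ℝ)
    (hψ : ∀ t, ψ t = -1
      + (1 / 64) * (4 * (1 - t ^ 4) * α + 3 * (1 - t ^ 2) ^ 2 * γ
          + (1 + 6 * t ^ 2 + t ^ 4) * c) ^ 2
      + (1 / 4) * t ^ 2 * (2 * (1 - t ^ 2) * β + (1 + t ^ 2) * s) ^ 2)
    (u1 u2 u3 σ1 σ2 σ3 : ℝ)
    (hu1 : u1 = Real.sqrt (2 * (2 + Real.sqrt 2)) - 1 - Real.sqrt 2)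
    (hu2 : u2 = Real.sqrt (2 + Real.sqrt 2) - 1)
    (hu3 : u3 = 1 + Real.sqrt 2 - Real.sqrt (2 + Real.sqrt 2))
    (hσ1 : σ1 = (1 - u1 ^ 2) + (1 - u2 ^ 2) + (1 - u3 ^ 2))
    (hσ2 : σ2 = (1 - u1 ^ 2) * (1 - u2 ^ 2) + (1 - u1 ^ 2) * (1 - u3 ^ 2)
      + (1 - u2 ^ 2) * (1 - u3 ^ 2))
    (hσ3 : σ3 = (1 - u1 ^ 2) * (1 - u2 ^ 2) * (1 - u3 ^ 2))
    (h1 : ψ u1 = 0) (h2 : ψ u2 = 0) (h3 : ψ u3 = 0)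
    (x y : ℝ) (hx : x = 4 * α - 3 * γ - c) (hy : y = 4 * α + 3 * γ + c) :
    0 = (-x / 32 + c / 8 + c ^ 3 / 8 - (σ3 / 512) * c * x ^ 2) * y
      - (1 / 4) * (((σ3 / 64) * x ^ 2 + (c / 4) * x - s ^ 2) ^ 2
        - (1 / 16) * (1 - σ2 + 2 * σ3) * c ^ 2 * x ^ 2
        + (1 / 16) * (2 - σ1) * x ^ 2 - c * (x - 8 * c)) := by
  subst hx hy hσ1 hσ2 hσ3
  have hcs : s ^ 2 + c ^ 2 = 1 := by rw [hc, hs]; exact sin_sq_add_cos_sq φ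
  obtain ⟨hu₁, hu₁₃, hu₃₂, hu₂⟩ := chebyshev_nodes_order hu1 hu2 hu3
  have hw₂ : 0 < 1 - u2 ^ 2 := by nlinarith
  have hw₂₃ : 1 - u2 ^ 2 < 1 - u3 ^ 2 := by nlinarith
  have hw₃₁ : 1 - u3 ^ 2 < 1 - u1 ^ 2 := by nlinarith
  have hw₃ := hw₂.trans hw₂₃
  have hw₁ := hw₃.trans hw₃₁
  obtain ⟨e₂, e₁, e₀⟩ := cubic_coeffs_of_three_roots (hw₂₃.trans hw₃₁).ne' hw₃₁.ne' hw₂₃.ne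
    (radialError_cubic_eq_zero hcs (by ring) hw₁.ne' ((hψ u1).symm.trans h1))
    (radialError_cubic_eq_zero hcs (by ring) hw₂.ne' ((hψ u2).symm.trans h2))
    (radialError_cubic_eq_zero hcs (by ring) hw₃.ne' ((hψ u3).symm.trans h3))
  exact relation_of_radialError_vieta hcs (by ring) e₂ e₁ e₀

/-- Equation (5) of the paper: if the simplified error function of the quartic G⁰
interpolant vanishes at `u₁, u₂, u₃`, then with `x = 4α − 3γ − c`, `y = 4α + 3γ + c`,
`y` satisfies the stated linear equation with coefficients built from `σ₁, σ₂, σ₃`. -/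
theorem stmt_12 (φ : ℝ) (hφ : φ ∈ Set.Ioc 0 (π / 2))
    (c s α β γ : ℝ) (hc : c = Real.cos φ) (hs : s = Real.sin φ)
    (ψ : ℝ → ℝ)
    (hψ : ∀ t, ψ t = -1
      + (1 / 64) * (4 * (1 - t ^ 4) * α + 3 * (1 - t ^ 2) ^ 2 * γ
          + (1 + 6 * t ^ 2 + t ^ 4) * c) ^ 2
      + (1 / 4) * t ^ 2 * (2 * (1 - t ^ 2) * β + (1 + t ^ 2) * s) ^ 2)
    (u1 u2 u3 σ1 σ2 σ3 : ℝ)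
    (hu1 : u1 = Real.sqrt (2 * (2 + Real.sqrt 2)) - 1 - Real.sqrt 2)
    (hu2 : u2 = Real.sqrt (2 + Real.sqrt 2) - 1)
    (hu3 : u3 = 1 + Real.sqrt 2 - Real.sqrt (2 + Real.sqrt 2))
    (hσ1 : σ1 = (1 - u1 ^ 2) + (1 - u2 ^ 2) + (1 - u3 ^ 2))
    (hσ2 : σ2 = (1 - u1 ^ 2) * (1 - u2 ^ 2) + (1 - u1 ^ 2) * (1 - u3 ^ 2)
      + (1 - u2 ^ 2) * (1 - u3 ^ 2))
    (hσ3 : σ3 = (1 - u1 ^ 2) * (1 - u2 ^ 2) * (1 - u3 ^ 2))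
    (h1 : ψ u1 = 0) (h2 : ψ u2 = 0) (h3 : ψ u3 = 0)
    (x y : ℝ) (hx : x = 4 * α - 3 * γ - c) (hy : y = 4 * α + 3 * γ + c) :
    0 = (-x / 32 + c / 8 + c ^ 3 / 8 - (σ3 / 512) * c * x ^ 2) * y
      - (1 / 4) * (((σ3 / 64) * x ^ 2 + (c / 4) * x - s ^ 2) ^ 2
        - (1 / 16) * (1 - σ2 + 2 * σ3) * c ^ 2 * x ^ 2
        + (1 / 16) * (2 - σ1) * x ^ 2 - c * (x - 8 * c)) :=
  stmt_12_general φ c s α β γ hc hs ψ hψ u1 u2 u3 σ1 σ2 σ3 hu1 hu2 hu3 hσ1 hσ2 hσ3 h1 h2 h3 x y hx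
    hy
end
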